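/- arXiv:1804.10044 — 10 statements merged into one kernel-verified Lean document; each statement's English description precedes it below -/
import Mathlib

section
/- Let l : ℝ → ℝ be a strictly increasing, convex, differentiable function with l(x) ≥ 0 for x ≥ 0, and let k be a positive integer and M a real number with M ≥ k·l(0). Then the equation k·l(x) + x·l'(x) = M has a unique solution x ≥ 0. -/
open Set

lemma deriv_cont_of_convex (l : ℝ → ℝ) (hconv : ConvexOn ℝ Set.univ l)
    (hdiff : Differentiable ℝ l) : Continuous (deriv l) := by
  have gmono : Monotone (deriv l) := fun x y hxy =>
    hconv.monotoneOn_deriv (fun z _ => hdiff z) (mem_univ x) (mem_univ y) hxy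
  rw [continuous_iff_continuousAt]
  intro a
  rw [continuousAt_iff_continuous_left_right]
  constructor
  · by_cases hL : ∀ c, deriv l a ≤ deriv l c
    · have hconst : ∀ y ∈ Iic a, deriv l y = deriv l a := fun y hy =>
        le_antisymm (gmono hy) (hL y)
      exact (continuousWithinAt_const (b := deriv l a)).congr hconst (hconst a self_mem_Iic)
    · push_neg at hL
      obtain ⟨c, hc⟩ := hL
      have hca : c < a := by
        by_contra h
        exact absurd (gmono (not_lt.1 h)) (not_le.2 hc)
      refine continuousWithinAt_left_of_monotoneOn_of_exists_between
        (gmono.monotoneOn _) Filter.univ_mem ?_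
      intro b hb
      have hm : max b (deriv l c) < deriv l a := max_lt hb hc
      obtain ⟨t, ht1, ht2⟩ := exists_between hm
      have hoc : Set.OrdConnected (deriv l '' Set.Icc c a) :=
        (Set.ordConnected_Icc).image_deriv (fun x _ => hdiff x)
      have h1 : deriv l c ∈ deriv l '' Set.Icc c a := ⟨c, ⟨le_rfl, hca.le⟩, rfl⟩
      have h2 : deriv l a ∈ deriv l '' Set.Icc c a := ⟨a, ⟨hca.le, le_rfl⟩, rfl⟩
      have ht : t ∈ deriv l '' Set.Icc c a :=
        hoc.out h1 h2 ⟨((le_max_right _ _).trans ht1.le), ht2.le⟩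
      obtain ⟨d, _, hd⟩ := ht
      exact ⟨d, mem_univ d, by rw [hd]; exact ⟨(le_max_left _ _).trans_lt ht1, ht2⟩⟩
  · by_cases hR : ∀ c, deriv l c ≤ deriv l a
    · have hconst : ∀ y ∈ Ici a, deriv l y = deriv l a := fun y hy =>
        le_antisymm (hR y) (gmono hy)
      exact (continuousWithinAt_const (b := deriv l a)).congr hconst (hconst a self_mem_Ici)
    · push_neg at hR
      obtain ⟨c, hc⟩ := hR
      have hca : a < c := by
        by_contra h
        exact absurd (gmono (not_lt.1 h)) (not_le.2 hc)
      refine continuousWithinAt_right_of_monotoneOn_of_exists_between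
        (gmono.monotoneOn _) Filter.univ_mem ?_
      intro b hb
      have hm : deriv l a < min b (deriv l c) := lt_min hb hc
      obtain ⟨t, ht1, ht2⟩ := exists_between hm
      have hoc : Set.OrdConnected (deriv l '' Set.Icc a c) :=
        (Set.ordConnected_Icc).image_deriv (fun x _ => hdiff x)
      have h1 : deriv l a ∈ deriv l '' Set.Icc a c := ⟨a, ⟨le_rfl, hca.le⟩, rfl⟩
      have h2 : deriv l c ∈ deriv l '' Set.Icc a c := ⟨c, ⟨hca.le, le_rfl⟩, rfl⟩
      have ht : t ∈ deriv l '' Set.Icc a c :=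
        hoc.out h1 h2 ⟨ht1.le, ht2.le.trans (min_le_right _ _)⟩
      obtain ⟨d, _, hd⟩ := ht
      exact ⟨d, mem_univ d, by rw [hd]; exact ⟨ht1, ht2.trans_le (min_le_left _ _)⟩⟩

/-- The edge-flow equation `k·l(x) + x·l'(x) = M` has a unique nonnegative solution
when `l` is strictly increasing, convex, differentiable, nonnegative on `[0,∞)`,
`k` is a positive integer and `M ≥ k·l(0)`. -/
theorem edge_flow_unique_solution
    (l : ℝ → ℝ) (hmono : StrictMono l) (hconv : ConvexOn ℝ Set.univ l)
    (hdiff : Differentiable ℝ l) (hnonneg : ∀ x : ℝ, 0 ≤ x → 0 ≤ l x)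
    (k : ℕ) (hk : 0 < k) (M : ℝ) (hM : (k : ℝ) * l 0 ≤ M) :
    ∃! x : ℝ, 0 ≤ x ∧ (k : ℝ) * l x + x * deriv l x = M := by
  have hk' : (0:ℝ) < k := Nat.cast_pos.2 hk
  have gmono : Monotone (deriv l) := fun x y hxy =>
    hconv.monotoneOn_deriv (fun z _ => hdiff z) (mem_univ x) (mem_univ y) hxy
  -- derivative is positive everywhere
  have gpos : ∀ y : ℝ, 0 < deriv l y := by
    intro y
    have h1 : slope l (y - 1) y ≤ deriv l y :=
      hconv.slope_le_deriv (mem_univ _) (mem_univ _) (by linarith) (hdiff y)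
    have h2 : (0:ℝ) < slope l (y - 1) y := by
      rw [slope_def_field]
      have := hmono (show y - 1 < y by linarith)
      have h3 : y - (y - 1) = 1 := by ring
      rw [h3, div_one]
      linarith
    linarith
  set f : ℝ → ℝ := fun x => (k : ℝ) * l x + x * deriv l x with hf
  have hfc : Continuous f :=
    (continuous_const.mul hdiff.continuous).add
      (continuous_id.mul (deriv_cont_of_convex l hconv hdiff))
  have hsm : StrictMonoOn f (Ici 0) := by
    intro x hx y hy hxy
    have h1 : (k : ℝ) * l x < (k : ℝ) * l y :=
      mul_lt_mul_of_pos_left (hmono hxy) hk'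
    have h2 : x * deriv l x ≤ y * deriv l y :=
      mul_le_mul hxy.le (gmono hxy.le) (gpos x).le ((mem_Ici.1 hx).trans hxy.le)
    simp only [hf]
    linarith
  -- a point where f is large
  set c := deriv l 1 with hc
  have hcpos : 0 < c := gpos 1
  set b : ℝ := 1 + max 0 ((M - (k:ℝ) * l 1) / ((k:ℝ) * c)) with hbdef
  have hb1 : (1:ℝ) ≤ b := by
    have h := le_max_left (0:ℝ) ((M - (k:ℝ) * l 1) / ((k:ℝ) * c))
    rw [hbdef]; linarith
  have hb0 : (0:ℝ) ≤ b := by linarith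
  have hlb : l 1 + c * (b - 1) ≤ l b := by
    rcases eq_or_lt_of_le hb1 with h | h
    · rw [← h]; simp
    · have hds : deriv l 1 ≤ slope l 1 b :=
        hconv.deriv_le_slope (mem_univ _) (mem_univ _) h (hdiff 1)
      rw [slope_def_field] at hds
      have hb1' : 0 < b - 1 := by linarith
      have := (le_div_iff₀ hb1').1 hds
      linarith
  have hMb : M ≤ f b := by
    have hq : (M - (k:ℝ) * l 1) / ((k:ℝ) * c) ≤ max 0 ((M - (k:ℝ) * l 1) / ((k:ℝ) * c)) :=
      le_max_right _ _
    have hkc : (0:ℝ) < (k:ℝ) * c := by positivity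
    have h1 : M - (k:ℝ) * l 1 ≤ (k:ℝ) * c * (b - 1) := by
      have := mul_le_mul_of_nonneg_left hq hkc.le
      rw [mul_div_cancel₀ _ hkc.ne'] at this
      have hb' : b - 1 = max 0 ((M - (k:ℝ) * l 1) / ((k:ℝ) * c)) := by
        rw [hbdef]; ring
      rw [hb']
      exact this
    have h2 : (k:ℝ) * (l 1 + c * (b - 1)) ≤ (k:ℝ) * l b :=
      mul_le_mul_of_nonneg_left hlb hk'.le
    have h3 : 0 ≤ b * deriv l b := mul_nonneg hb0 (gpos b).le
    simp only [hf]
    nlinarith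
  have hM0 : f 0 = (k:ℝ) * l 0 := by simp [hf]
  have hMem : M ∈ Icc (f 0) (f b) := ⟨by rw [hM0]; exact hM, hMb⟩
  obtain ⟨x, hx, hfx⟩ := intermediate_value_Icc hb0 hfc.continuousOn hMem
  refine ⟨x, ⟨hx.1, hfx⟩, ?_⟩
  rintro y ⟨hy0, hyM⟩
  exact hsm.injOn (mem_Ici.2 hy0) (mem_Ici.2 hx.1) (hyM.trans hfx.symm)
end

section
/- Let l : ℝ → ℝ be nondecreasing with nonnegative, nondecreasing derivative on [0,∞) (i.e., l convex, increasing, differentiable). For integers 1 ≤ k < n and reals M¹ ≥ M² ≥ … ≥ Mⁿ, let x(k) be the unique nonnegative solution of k·l(x) + x·l'(x) = M¹ + … + Mᵏ and x(k+1) the unique nonnegative solution of (k+1)·l(x) + x·l'(x) = M¹ + … + Mᵏ⁺¹, assuming both exist and M^{k+1} > l(x(k)). Then x(k+1) ≥ x(k) and M^{k+1} ≥ l(x(k+1)). -/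
/-- Key inductive step in GraphFlow correctness: adding a player with marginal cost
exceeding the current edge latency increases total edge flow, and the new player's
flow stays nonnegative.  Here `x k` solves `k·l(x) + x·l'(x) = M¹ + … + Mᵏ`. -/
theorem graphflow_inductive_step
    (l : ℝ → ℝ) (hmono : Monotone l)
    (hderiv_nonneg : ∀ x : ℝ, 0 ≤ x → 0 ≤ deriv l x)
    (hderiv_mono : ∀ x y : ℝ, 0 ≤ x → x ≤ y → deriv l x ≤ deriv l y)
    (n k : ℕ) (hk : 1 ≤ k) (hkn : k < n)
    (M : ℕ → ℝ) (hM : ∀ i, M (i + 1) ≤ M i)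
    (x : ℕ → ℝ) (hxk_nonneg : 0 ≤ x k) (hxk1_nonneg : 0 ≤ x (k + 1))
    (hxk : (k : ℝ) * l (x k) + x k * deriv l (x k) = ∑ i ∈ Finset.Icc 1 k, M i)
    (hxk1 : ((k : ℝ) + 1) * l (x (k + 1)) + x (k + 1) * deriv l (x (k + 1)) =
      ∑ i ∈ Finset.Icc 1 (k + 1), M i)
    (hnew : l (x k) < M (k + 1)) :
    x k ≤ x (k + 1) ∧ l (x (k + 1)) ≤ M (k + 1) := by
  have hsum : ∑ i ∈ Finset.Icc 1 (k + 1), M i = (∑ i ∈ Finset.Icc 1 k, M i) + M (k + 1) :=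
    Finset.sum_Icc_succ_top (by omega) M
  have key : M (k + 1) = ((k : ℝ) + 1) * l (x (k + 1)) + x (k + 1) * deriv l (x (k + 1))
      - ((k : ℝ) * l (x k) + x k * deriv l (x k)) := by
    rw [hxk, hxk1, hsum]; ring
  have hkpos : (0 : ℝ) ≤ (k : ℝ) := Nat.cast_nonneg k
  have hle : x k ≤ x (k + 1) := by
    by_contra h
    push_neg at h
    have h1 : l (x (k + 1)) ≤ l (x k) := hmono h.le
    have h2 : x (k + 1) * deriv l (x (k + 1)) ≤ x k * deriv l (x k) :=
      mul_le_mul h.le (hderiv_mono _ _ hxk1_nonneg h.le) (hderiv_nonneg _ hxk1_nonneg)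
        hxk_nonneg
    nlinarith [mul_le_mul_of_nonneg_left h1 hkpos]
  refine ⟨hle, ?_⟩
  have h1 : l (x k) ≤ l (x (k + 1)) := hmono hle
  have h2 : x k * deriv l (x k) ≤ x (k + 1) * deriv l (x (k + 1)) :=
    mul_le_mul hle (hderiv_mono _ _ hxk_nonneg hle) (hderiv_nonneg _ hxk_nonneg) hxk1_nonneg
  nlinarith [mul_le_mul_of_nonneg_left h1 hkpos]
end

section
/- Let M, M̂ be nonnegative reals and (M¹, …, Mᵏ) a vector of nonnegative reals with ∑_{i≤k} Mⁱ = M. Define a vector (M̂¹, …, M̂ᵏ) as follows: if M̂ ≥ M, set M̂¹ = M¹ + (M̂ − M) and M̂ⁱ = Mⁱ for i ≥ 2; otherwise define recursively δ(0) = M − M̂, M̂ⁱ = max{0, Mⁱ − δ(i−1)}, and δ(i) = δ(i−1) − (Mⁱ − M̂ⁱ). Then the resulting vector satisfies: (1) M̂ⁱ ≥ 0 for all i, (2) |Mⁱ − M̂ⁱ| ≤ |M − M̂| for all i ≤ k, and (3) ∑_{i≤k} M̂ⁱ = M̂. -/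
/-- Correctness of the `Redistrib` procedure: given a nonnegative vector `Mv` summing
to `M` and a nonnegative target `M̂`, the redistributed vector `Mh` is nonnegative,
componentwise within `|M − M̂|` of `Mv`, and sums to `M̂`. -/
theorem redistrib_correct
    (k : ℕ) (hk : 1 ≤ k) (M Mhat : ℝ) (hM : 0 ≤ M) (hMhat : 0 ≤ Mhat)
    (Mv Mh δ : ℕ → ℝ)
    (hMv_nonneg : ∀ i ∈ Finset.Icc 1 k, 0 ≤ Mv i)
    (hsum : ∑ i ∈ Finset.Icc 1 k, Mv i = M)
    -- case M̂ ≥ M : give all the excess to player 1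
    (hge : Mhat ≥ M →
      Mh 1 = Mv 1 + (Mhat - M) ∧ ∀ i ∈ Finset.Icc 2 k, Mh i = Mv i)
    -- case M > M̂ : distribute the deficit, maintaining nonnegativity
    (hlt : M > Mhat →
      δ 0 = M - Mhat ∧
      ∀ i ∈ Finset.Icc 1 k,
        Mh i = max 0 (Mv i - δ (i - 1)) ∧ δ i = δ (i - 1) - (Mv i - Mh i)) :
    (∀ i ∈ Finset.Icc 1 k, 0 ≤ Mh i) ∧
    (∀ i ∈ Finset.Icc 1 k, |Mv i - Mh i| ≤ |M - Mhat|) ∧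
    ∑ i ∈ Finset.Icc 1 k, Mh i = Mhat := by
  rcases le_or_gt M Mhat with hcase | hcase
  · -- case M̂ ≥ M
    obtain ⟨h1, h2⟩ := hge hcase
    have hsplit : Finset.Icc 1 k = insert 1 (Finset.Icc 2 k) := by
      ext x; simp only [Finset.mem_Icc, Finset.mem_insert]; omega
    have h1notin : (1 : ℕ) ∉ Finset.Icc 2 k := by simp
    have habs : |M - Mhat| = Mhat - M := by
      rw [abs_of_nonpos (by linarith)]; ring
    refine ⟨?_, ?_, ?_⟩
    · intro i hi
      rcases eq_or_ne i 1 with rfl | hne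
      · have := hMv_nonneg 1 hi
        rw [h1]; linarith
      · have hi2 : i ∈ Finset.Icc 2 k := by
          simp only [Finset.mem_Icc] at hi ⊢
          omega
        rw [h2 i hi2]; exact hMv_nonneg i hi
    · intro i hi
      rcases eq_or_ne i 1 with rfl | hne
      · rw [h1, habs]
        rw [show Mv 1 - (Mv 1 + (Mhat - M)) = -(Mhat - M) by ring, abs_neg,
          abs_of_nonneg (by linarith)]
      · have hi2 : i ∈ Finset.Icc 2 k := by
          simp only [Finset.mem_Icc] at hi ⊢
          omega
        rw [h2 i hi2]
        simp [abs_nonneg]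
    · have hsum2 : Mv 1 + ∑ i ∈ Finset.Icc 2 k, Mv i = M := by
        rw [← Finset.sum_insert h1notin, ← hsplit]; exact hsum
      rw [hsplit, Finset.sum_insert h1notin, h1,
        Finset.sum_congr rfl (fun i hi => h2 i hi)]
      linarith
  · -- case M > M̂
    obtain ⟨h0, hrec⟩ := hlt hcase
    have hδ0 : 0 ≤ δ 0 := by rw [h0]; linarith
    -- key induction
    have key : ∀ i, i ≤ k → 0 ≤ δ i ∧ δ i ≤ δ 0 ∧
        δ i ≤ max 0 (δ 0 - ∑ j ∈ Finset.Icc 1 i, Mv j) ∧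
        (∑ j ∈ Finset.Icc 1 i, Mh j) = (∑ j ∈ Finset.Icc 1 i, Mv j) - δ 0 + δ i := by
      intro i
      induction i with
      | zero => intro _; simp [hδ0]
      | succ n ih =>
        intro hnk
        have hn : n ≤ k := Nat.le_of_succ_le hnk
        obtain ⟨ih0, ih1, ih2, ih3⟩ := ih hn
        have hmem : n + 1 ∈ Finset.Icc 1 k := by simp [Nat.succ_le_of_lt]; omega
        obtain ⟨hMh, hδ⟩ := hrec (n + 1) hmem
        simp only [Nat.add_sub_cancel] at hMh hδ
        have hMvn : 0 ≤ Mv (n + 1) := hMv_nonneg _ hmem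
        have hsumstep : ∀ f : ℕ → ℝ, (∑ j ∈ Finset.Icc 1 (n+1), f j)
            = (∑ j ∈ Finset.Icc 1 n, f j) + f (n+1) := by
          intro f
          exact Finset.sum_Icc_succ_top (by omega) f
        have hδeq : δ (n+1) = max 0 (δ n - Mv (n+1)) := by
          rcases le_total (Mv (n+1)) (δ n) with h | h
          · rw [hδ, hMh, max_eq_left (by linarith), max_eq_right (by linarith)]
            ring
          · rw [hδ, hMh, max_eq_right (by linarith), max_eq_left (by linarith)]
            ring
        refine ⟨by rw [hδeq]; exact le_max_left _ _, ?_, ?_, ?_⟩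
        · rw [hδeq]
          exact max_le hδ0 (by linarith)
        · rw [hδeq, hsumstep]
          rcases le_total (δ 0 - ∑ j ∈ Finset.Icc 1 n, Mv j) 0 with h | h
          · have : δ n ≤ 0 := le_trans ih2 (by rw [max_eq_left h])
            have h0' : δ n - Mv (n+1) ≤ 0 := by linarith
            rw [max_eq_left (by linarith)]
            exact le_max_left _ _
          · rw [max_eq_right h] at ih2
            have : δ n - Mv (n+1) ≤ δ 0 - ((∑ j ∈ Finset.Icc 1 n, Mv j) + Mv (n+1)) := by
              linarith
            exact max_le_max le_rfl this
        · rw [hsumstep Mh, hsumstep Mv, ih3, hδ]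
          ring
    obtain ⟨hk0, _, hk2, hk3⟩ := key k le_rfl
    have hδk : δ k = 0 := by
      rw [hsum, h0] at hk2
      have : max 0 (M - Mhat - M) = 0 := max_eq_left (by linarith)
      rw [this] at hk2
      linarith
    have habs : |M - Mhat| = δ 0 := by
      rw [abs_of_nonneg (by linarith), h0]
    refine ⟨?_, ?_, ?_⟩
    · intro i hi
      rw [(hrec i hi).1]
      exact le_max_left _ _
    · intro i hi
      obtain ⟨hMh, hδ⟩ := hrec i hi
      have hi1 : 1 ≤ i := (Finset.mem_Icc.mp hi).1
      have hik2 : i ≤ k := (Finset.mem_Icc.mp hi).2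
      have hik : i - 1 ≤ k := by omega
      obtain ⟨hp0, hp1, _, _⟩ := key (i - 1) hik
      have hMvi : 0 ≤ Mv i := hMv_nonneg i hi
      rw [habs]
      rcases le_total (Mv i - δ (i-1)) 0 with h | h
      · rw [hMh, max_eq_left h]
        rw [abs_of_nonneg (by linarith)]
        linarith
      · rw [hMh, max_eq_right h]
        rw [show Mv i - (Mv i - δ (i-1)) = δ (i-1) by ring, abs_of_nonneg hp0]
        exact hp1
    · rw [hk3, hsum, hδk, h0]; ring
end

section
/- In the deficit-redistribution recursion, with M > M̂ ≥ 0, ∑_{i≤k} Mⁱ = M, Mⁱ ≥ 0, δ(0) = M − M̂, M̂ⁱ = max{0, Mⁱ − δ(i−1)}, δ(i) = δ(i−1) − (Mⁱ − M̂ⁱ), the sequence of deficits satisfies M − M̂ = δ(0) ≥ δ(1) ≥ … ≥ δ(k) ≥ 0, and moreover δ(k) = 0. -/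
/-- In the deficit-redistribution recursion with `M > M̂ ≥ 0`, the deficits are
nonincreasing and nonnegative, and the final deficit is zero. -/
theorem redistrib_deficits
    (k : ℕ) (M Mhat : ℝ) (hMhat : 0 ≤ Mhat) (hlt : Mhat < M)
    (Mv Mh δ : ℕ → ℝ)
    (hMv_nonneg : ∀ i ∈ Finset.Icc 1 k, 0 ≤ Mv i)
    (hsum : ∑ i ∈ Finset.Icc 1 k, Mv i = M)
    (hδ0 : δ 0 = M - Mhat)
    (hrec : ∀ i ∈ Finset.Icc 1 k,
      Mh i = max 0 (Mv i - δ (i - 1)) ∧ δ i = δ (i - 1) - (Mv i - Mh i)) :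
    (∀ i ∈ Finset.Icc 1 k, δ i ≤ δ (i - 1)) ∧
    (∀ i ≤ k, 0 ≤ δ i) ∧
    δ k = 0 := by
  -- rewrite the recursion as δ i = δ (i-1) - min (Mv i) (δ (i-1))
  have key : ∀ i ∈ Finset.Icc 1 k, δ i = δ (i - 1) - min (Mv i) (δ (i - 1)) := by
    intro i hi
    obtain ⟨h1, h2⟩ := hrec i hi
    rw [h2, h1]
    have : Mv i - max 0 (Mv i - δ (i - 1)) = min (Mv i) (δ (i - 1)) := by
      rcases le_total (Mv i) (δ (i - 1)) with h | h
      · rw [max_eq_left (by linarith), min_eq_left h]; ring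
      · rw [max_eq_right (by linarith), min_eq_right h]; ring
    rw [this]
  -- nonnegativity
  have hnn : ∀ i ≤ k, 0 ≤ δ i := by
    intro i
    induction i with
    | zero => intro _; rw [hδ0]; linarith
    | succ n ih =>
      intro h
      have hn : n ≤ k := Nat.le_of_succ_le h
      have hmem : n + 1 ∈ Finset.Icc 1 k :=
        Finset.mem_Icc.mpr ⟨Nat.succ_le_succ (Nat.zero_le n), h⟩
      have hk := key (n + 1) hmem
      simp only [Nat.add_sub_cancel] at hk
      have h1 := min_le_right (Mv (n + 1)) (δ n)
      have h2 := ih hn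
      linarith
  -- nonincreasing
  have hmono : ∀ i ∈ Finset.Icc 1 k, δ i ≤ δ (i - 1) := by
    intro i hi
    obtain ⟨h1, h2⟩ := Finset.mem_Icc.mp hi
    have hk := key i hi
    have hd : 0 ≤ δ (i - 1) := hnn (i - 1) (le_trans (Nat.sub_le i 1) h2)
    have hM : 0 ≤ Mv i := hMv_nonneg i hi
    have : 0 ≤ min (Mv i) (δ (i - 1)) := le_min hM hd
    linarith
  refine ⟨hmono, hnn, ?_⟩
  -- δ k = 0
  by_contra hne
  have hkpos : 0 < δ k := lt_of_le_of_ne (hnn k le_rfl) (Ne.symm hne)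
  -- δ is nonincreasing along 0..k
  have hdec : ∀ b ≤ k, ∀ a ≤ b, δ b ≤ δ a := by
    intro b
    induction b with
    | zero => intro _ a ha; interval_cases a; exact le_rfl
    | succ n ih =>
      intro hb a ha
      have hmem : n + 1 ∈ Finset.Icc 1 k :=
        Finset.mem_Icc.mpr ⟨Nat.succ_le_succ (Nat.zero_le n), hb⟩
      have hstep := hmono (n + 1) hmem
      simp only [Nat.add_sub_cancel] at hstep
      rcases Nat.lt_or_ge a (n + 1) with h | h
      · exact le_trans hstep (ih (Nat.le_of_succ_le hb) a (Nat.lt_succ_iff.mp h))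
      · have : a = n + 1 := le_antisymm ha h
        rw [this]
  -- every intermediate deficit is positive, so min = Mv i
  have hexact : ∀ i ∈ Finset.Icc 1 k, δ i = δ (i - 1) - Mv i := by
    intro i hi
    obtain ⟨h1, h2⟩ := Finset.mem_Icc.mp hi
    have hk := key i hi
    have hipos : 0 < δ i := lt_of_lt_of_le hkpos (hdec k le_rfl i h2)
    have : min (Mv i) (δ (i - 1)) < δ (i - 1) := by linarith
    have hmin : min (Mv i) (δ (i - 1)) = Mv i := by
      rcases min_cases (Mv i) (δ (i - 1)) with ⟨he, _⟩ | ⟨he, hle⟩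
      · exact he
      · exfalso; linarith
    rw [hmin] at hk; exact hk
  -- telescoping
  have htel : ∀ n ≤ k, δ n = δ 0 - ∑ i ∈ Finset.Icc 1 n, Mv i := by
    intro n
    induction n with
    | zero => intro _; simp
    | succ n ih =>
      intro h
      have hmem : n + 1 ∈ Finset.Icc 1 k :=
        Finset.mem_Icc.mpr ⟨Nat.succ_le_succ (Nat.zero_le n), h⟩
      have he := hexact (n + 1) hmem
      simp only [Nat.add_sub_cancel] at he
      rw [he, ih (Nat.le_of_succ_le h),
        Finset.sum_Icc_succ_top (Nat.succ_le_succ (Nat.zero_le n))]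
      ring
  have := htel k le_rfl
  rw [hsum, hδ0] at this
  linarith
end

section
/- With the setup of atomic splittable routing on parallel edges (marginal cost L_e^i(f) = l_e(f_e) + f_e^i·l_e'(f_e), with each l_e nonnegative, strictly increasing, convex, differentiable): for each vector M = (M¹, …, Mⁿ) of nonnegative marginal costs, there is at most one pair (w, f) of a demand vector w and a flow f such that (1) f is an equilibrium flow with player demands w (each player routes w_i and only uses edges minimizing its marginal cost), and (2) for each player i, L^i(f) ≥ Mⁱ, and if w_i > 0 then L^i(f) = Mⁱ. (Uniqueness is asserted assuming the equilibrium for any fixed demand vector on parallel edges is unique.) -/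
/-- A convex, strictly monotone, differentiable function on ℝ has positive derivative. -/
lemma aux_deriv_pos {l : ℝ → ℝ} (hmono : StrictMono l) (hconv : ConvexOn ℝ Set.univ l)
    (hdiff : Differentiable ℝ l) (x : ℝ) : 0 < deriv l x := by
  have hs : slope l (x - 1) x ≤ deriv l x :=
    hconv.slope_le_deriv (Set.mem_univ _) (Set.mem_univ _) (by linarith) (hdiff x)
  have hp : 0 < slope l (x - 1) x := by
    rw [slope_def_field]
    have := hmono (show x - 1 < x by linarith)
    have : 0 < l x - l (x - 1) := by linarith
    have hd : x - (x - 1) = 1 := by ring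
    rw [hd, div_one]; linarith
  linarith

lemma aux_key {l : ℝ → ℝ} (hmono : StrictMono l) (hconv : ConvexOn ℝ Set.univ l)
    (hdiff : Differentiable ℝ l) {a b S S' : ℝ} (hab : b < a) (hb : 0 ≤ b) (hS : S' ≤ S) :
    l S' + b * deriv l S' < l S + a * deriv l S := by
  have hdm : Monotone (deriv l) := by
    have := hconv.monotoneOn_deriv (fun x _ => hdiff x)
    exact fun x y hxy => this (Set.mem_univ x) (Set.mem_univ y) hxy
  have h1 : l S' ≤ l S := hmono.monotone hS
  have h2 : b * deriv l S' ≤ b * deriv l S := mul_le_mul_of_nonneg_left (hdm hS) hb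
  have h3 : b * deriv l S < a * deriv l S :=
    mul_lt_mul_of_pos_right hab (aux_deriv_pos hmono hconv hdiff S)
  linarith

/-- Claim 3.2: each marginal cost vector `M` determines at most one pair `(w, f)` of
demands and equilibrium flow with `L^i(f) ≥ Mⁱ` for all players, with equality for
players of positive demand (assuming uniqueness of equilibrium for fixed demands). -/
theorem marginal_cost_vector_unique_pair
    (m n : ℕ) (l : Fin m → ℝ → ℝ)
    (hl_nonneg : ∀ e, ∀ x : ℝ, 0 ≤ x → 0 ≤ l e x)
    (hl_mono : ∀ e, StrictMono (l e))
    (hl_conv : ∀ e, ConvexOn ℝ Set.univ (l e))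
    (hl_diff : ∀ e, Differentiable ℝ (l e))
    -- marginal cost of player i on edge e under flow f
    (L : (Fin m → Fin n → ℝ) → Fin m → Fin n → ℝ)
    (hL : ∀ f e i, L f e i =
      l e (∑ j, f e j) + f e i * deriv (l e) (∑ j, f e j))
    -- equilibrium flow for demands w
    (IsEqFlow : (Fin m → Fin n → ℝ) → (Fin n → ℝ) → Prop)
    (hIsEqFlow : ∀ f w, IsEqFlow f w ↔
      ((∀ e i, 0 ≤ f e i) ∧ (∀ i, ∑ e, f e i = w i) ∧
        ∀ (i : Fin n) (e e' : Fin m), 0 < f e i → L f e i ≤ L f e' i))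
    -- uniqueness of equilibrium for a fixed demand vector (parallel edges)
    (huniq : ∀ w f f', IsEqFlow f w → IsEqFlow f' w → f = f')
    (M : Fin n → ℝ) (hM : ∀ i, 0 ≤ M i)
    (w w' : Fin n → ℝ) (f f' : Fin m → Fin n → ℝ)
    (hf : IsEqFlow f w)
    (hfM : ∀ i, M i ≤ ⨅ e, L f e i)
    (hfM' : ∀ i, 0 < w i → (⨅ e, L f e i) = M i)
    (hg : IsEqFlow f' w')
    (hgM : ∀ i, M i ≤ ⨅ e, L f' e i)
    (hgM' : ∀ i, 0 < w' i → (⨅ e, L f' e i) = M i) :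
    w = w' ∧ f = f' := by
  -- A symmetric lemma: under the hypotheses, w i ≤ w' i for all i.
  have main : ∀ (w w' : Fin n → ℝ) (f f' : Fin m → Fin n → ℝ),
      IsEqFlow f w → (∀ i, M i ≤ ⨅ e, L f e i) → (∀ i, 0 < w i → (⨅ e, L f e i) = M i) →
      IsEqFlow f' w' → (∀ i, M i ≤ ⨅ e, L f' e i) → (∀ i, 0 < w' i → (⨅ e, L f' e i) = M i) →
      ∀ i, w i ≤ w' i := by
    intro w w' f f' hf hfM hfM' hg hgM hgM' i
    by_contra hlt
    push_neg at hlt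
    obtain ⟨hf1, hf2, hf3⟩ := (hIsEqFlow f w).1 hf
    obtain ⟨hg1, hg2, hg3⟩ := (hIsEqFlow f' w').1 hg
    -- there is an edge e with f' e i < f e i
    have hsum : ∑ e, f' e i < ∑ e, f e i := by rw [hf2, hg2]; exact hlt
    obtain ⟨e, he⟩ : ∃ e, f' e i < f e i := by
      by_contra h
      push_neg at h
      exact absurd (Finset.sum_le_sum (fun e _ => h e)) (not_le.2 hsum)
    have hwi : 0 < w i := by
      have : 0 ≤ w' i := by
        rw [← hg2 i]; exact Finset.sum_nonneg fun e _ => hg1 e i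
      linarith
    have hfei : 0 < f e i := lt_of_le_of_lt (hg1 e i) he
    haveI : Nonempty (Fin m) := ⟨e⟩
    have hbdd : ∀ (h : Fin m → Fin n → ℝ) (k : Fin n), BddBelow (Set.range fun e => L h e k) :=
      fun h k => (Set.finite_range _).bddBelow
    -- L f e i = M i
    have hLeq : L f e i = M i := by
      have h1 : L f e i ≤ ⨅ e', L f e' i := le_ciInf fun e' => hf3 i e e' hfei
      have h2 : (⨅ e', L f e' i) ≤ L f e i := ciInf_le (hbdd f i) e
      have h3 := hfM' i hwi
      have h4 := hfM i
      linarith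
    set S := ∑ j, f e j with hSdef
    set S' := ∑ j, f' e j with hS'def
    rcases le_or_gt S' S with hSS | hSS
    · -- contradiction: L f e i > L f' e i ≥ M i = L f e i
      have hkey : l e S' + f' e i * deriv (l e) S' < l e S + f e i * deriv (l e) S :=
        aux_key (hl_mono e) (hl_conv e) (hl_diff e) he (hg1 e i) hSS
      have h5 : M i ≤ L f' e i := (hgM i).trans (ciInf_le (hbdd f' i) e)
      rw [hL f e i, hL f' e i] at *
      linarith [hLeq, hkey, h5]
    · -- total flow on e is larger for f'; find a player j with f e j < f' e j
      obtain ⟨j, hj⟩ : ∃ j, f e j < f' e j := by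
        by_contra h
        push_neg at h
        exact absurd (Finset.sum_le_sum (fun j _ => h j)) (not_le.2 hSS)
      have hgej : 0 < f' e j := lt_of_le_of_lt (hf1 e j) hj
      have hwj : 0 < w' j := by
        rw [← hg2 j]
        exact Finset.sum_pos' (fun e' _ => hg1 e' j) ⟨e, Finset.mem_univ e, hgej⟩
      have hLeq' : L f' e j = M j := by
        have h1 : L f' e j ≤ ⨅ e', L f' e' j := le_ciInf fun e' => hg3 j e e' hgej
        have h2 : (⨅ e', L f' e' j) ≤ L f' e j := ciInf_le (hbdd f' j) e
        have h3 := hgM' j hwj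
        have h4 := hgM j
        linarith
      have hkey : l e S + f e j * deriv (l e) S < l e S' + f' e j * deriv (l e) S' :=
        aux_key (hl_mono e) (hl_conv e) (hl_diff e) hj (hf1 e j) hSS.le
      have h5 : M j ≤ L f e j := (hfM j).trans (ciInf_le (hbdd f j) e)
      rw [hL f' e j, hL f e j] at *
      linarith [hLeq', hkey, h5]
  have hw : w = w' := funext fun i =>
    le_antisymm (main w w' f f' hf hfM hfM' hg hgM hgM' i)
      (main w' w f' f hg hgM hgM' hf hfM hfM' i)
  exact ⟨hw, huniq w f f' hf (hw ▸ hg)⟩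
end

section
/- Monotonicity of GraphFlow: let M and M' be marginal cost vectors differing only in the first coordinate, with M'¹ > M¹, and let (f, w) and (f', w') be pairs satisfying the GraphFlow output conditions for M and M' respectively (f is an equilibrium for demands w; on each edge, f_e^i = 0 implies L_e^i(f) ≥ Mⁱ and f_e^i > 0 implies L_e^i(f) = Mⁱ; similarly for primed quantities). Then: (1) on every edge the total flow satisfies f_e' ≥ f_e; (2) w₁' ≥ w₁; (3) if w₁' > 0 then w₁' > w₁; (4) w_i' ≤ w_i for every player i > 1; and (5) for any subset P of players containing player 1, ∑_{i∈P} w_i' ≥ ∑_{i∈P} w_i. -/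
/-- Claim 3.6 (monotonicity of GraphFlow): increasing the first player's input
marginal cost weakly increases every edge's total flow and the first player's demand
(strictly if the new demand is positive), decreases every other player's demand, and
increases the total demand of any player subset containing the first player. -/
theorem graphflow_monotone
    (m n : ℕ) (hn : 0 < n) (l : Fin m → ℝ → ℝ)
    (hl_nonneg : ∀ e, ∀ x : ℝ, 0 ≤ x → 0 ≤ l e x)
    (hl_mono : ∀ e, StrictMono (l e))
    (hl_conv : ∀ e, ConvexOn ℝ Set.univ (l e))
    (hl_diff : ∀ e, Differentiable ℝ (l e))
    (L : (Fin m → Fin n → ℝ) → Fin m → Fin n → ℝ)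
    (hL : ∀ f e i, L f e i =
      l e (∑ j, f e j) + f e i * deriv (l e) (∑ j, f e j))
    (p1 : Fin n) (hp1 : p1 = ⟨0, hn⟩)
    (M M' : Fin n → ℝ) (hM1 : M p1 < M' p1) (hMi : ∀ i ≠ p1, M' i = M i)
    (f f' : Fin m → Fin n → ℝ) (w w' : Fin n → ℝ)
    -- GraphFlow output conditions for (f, w) with marginal costs M
    (hf_nonneg : ∀ e i, 0 ≤ f e i) (hw : ∀ i, w i = ∑ e, f e i)
    (hf0 : ∀ e i, f e i = 0 → M i ≤ L f e i)
    (hfpos : ∀ e i, 0 < f e i → L f e i = M i)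
    -- GraphFlow output conditions for (f', w') with marginal costs M'
    (hf'_nonneg : ∀ e i, 0 ≤ f' e i) (hw' : ∀ i, w' i = ∑ e, f' e i)
    (hf'0 : ∀ e i, f' e i = 0 → M' i ≤ L f' e i)
    (hf'pos : ∀ e i, 0 < f' e i → L f' e i = M' i) :
    (∀ e, (∑ j, f e j) ≤ ∑ j, f' e j) ∧
    w p1 ≤ w' p1 ∧
    (0 < w' p1 → w p1 < w' p1) ∧
    (∀ i ≠ p1, w' i ≤ w i) ∧
    (∀ P : Finset (Fin n), p1 ∈ P → ∑ i ∈ P, w i ≤ ∑ i ∈ P, w' i) := by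
  -- the derivative of each latency function is monotone and positive
  have hd_mono : ∀ e, Monotone (deriv (l e)) := by
    intro e x y hxy
    exact (hl_conv e).monotoneOn_deriv (fun z _ => (hl_diff e z))
      (Set.mem_univ x) (Set.mem_univ y) hxy
  have hd_pos : ∀ e x, 0 < deriv (l e) x := by
    intro e x
    obtain ⟨c, hc, hceq⟩ := exists_deriv_eq_slope (l e) (show x - 1 < x by linarith)
      ((hl_diff e).continuous.continuousOn) ((hl_diff e).differentiableOn)
    have h1 : 0 < l e x - l e (x - 1) := sub_pos.mpr (hl_mono e (by linarith))
    have h2 : 0 < deriv (l e) c := by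
      rw [hceq]
      have : x - (x - 1) = 1 := by ring
      rw [this, div_one]; linarith
    exact lt_of_lt_of_le h2 (hd_mono e hc.2.le)
  have hLge : ∀ e i, M i ≤ L f e i := by
    intro e i
    rcases (hf_nonneg e i).eq_or_lt with h | h
    · exact hf0 e i h.symm
    · exact (hfpos e i h).ge
  have hL'ge : ∀ e i, M' i ≤ L f' e i := by
    intro e i
    rcases (hf'_nonneg e i).eq_or_lt with h | h
    · exact hf'0 e i h.symm
    · exact (hf'pos e i h).ge
  have hMle : ∀ i, M i ≤ M' i := by
    intro i
    by_cases h : i = p1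
    · subst h; exact hM1.le
    · rw [hMi i h]
  -- Claim (1): total flow increases on every edge
  have key1 : ∀ e, (∑ j, f e j) ≤ ∑ j, f' e j := by
    intro e
    by_contra hcon
    push_neg at hcon
    have hF'nonneg : (0:ℝ) ≤ ∑ j, f' e j := Finset.sum_nonneg fun j _ => hf'_nonneg e j
    have hFpos : (0:ℝ) < ∑ j, f e j := lt_of_le_of_lt hF'nonneg hcon
    obtain ⟨i0, -, hi0⟩ : ∃ i ∈ Finset.univ, 0 < f e i := by
      by_contra hno
      push_neg at hno
      exact absurd (Finset.sum_nonpos fun j hj => hno j hj) (not_le.mpr hFpos)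
    have hlt : ∀ i, 0 < f e i → f e i < f' e i := by
      intro i hi
      have h3 : L f e i ≤ L f' e i := (hfpos e i hi).le.trans ((hMle i).trans (hL'ge e i))
      rw [hL, hL] at h3
      have hlF : l e (∑ j, f' e j) < l e (∑ j, f e j) := hl_mono e hcon
      have hdF : deriv (l e) (∑ j, f' e j) ≤ deriv (l e) (∑ j, f e j) := hd_mono e hcon.le
      have hdp := hd_pos e (∑ j, f' e j)
      nlinarith [mul_le_mul_of_nonneg_left hdF (hf_nonneg e i),
        mul_pos hdp (sub_pos.mpr hi)]
    have hsum : (∑ j, f e j) < ∑ j, f' e j := by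
      refine Finset.sum_lt_sum (fun i _ => ?_) ⟨i0, Finset.mem_univ i0, hlt i0 hi0⟩
      rcases (hf_nonneg e i).eq_or_lt with h | h
      · rw [← h]; exact hf'_nonneg e i
      · exact (hlt i h).le
    linarith
  -- Claim (4) edgewise: other players' flows decrease on every edge
  have key2 : ∀ e, ∀ i, i ≠ p1 → f' e i ≤ f e i := by
    intro e i hi
    by_contra hcon
    push_neg at hcon
    have hf'i : 0 < f' e i := lt_of_le_of_lt (hf_nonneg e i) hcon
    have h3 : L f' e i ≤ L f e i := by
      rw [hf'pos e i hf'i, hMi i hi]; exact hLge e i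
    rw [hL, hL] at h3
    have hlF : l e (∑ j, f e j) ≤ l e (∑ j, f' e j) := (hl_mono e).monotone (key1 e)
    have hdF : deriv (l e) (∑ j, f e j) ≤ deriv (l e) (∑ j, f' e j) := hd_mono e (key1 e)
    have hdp := hd_pos e (∑ j, f e j)
    nlinarith [mul_le_mul_of_nonneg_left hdF (hf'_nonneg e i),
      mul_pos hdp (sub_pos.mpr hcon)]
  -- edgewise version of claim (5)
  have keyP : ∀ e, ∀ P : Finset (Fin n), p1 ∈ P →
      ∑ i ∈ P, f e i ≤ ∑ i ∈ P, f' e i := by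
    intro e P hP
    have hsplit := Finset.sum_add_sum_compl P (f e)
    have hsplit' := Finset.sum_add_sum_compl P (f' e)
    have hcomp : ∑ i ∈ Pᶜ, f' e i ≤ ∑ i ∈ Pᶜ, f e i := by
      refine Finset.sum_le_sum fun i hi => key2 e i ?_
      intro h
      exact (Finset.mem_compl.mp hi) (h ▸ hP)
    have := key1 e
    linarith
  -- edgewise version of claim (2)
  have key3 : ∀ e, f e p1 ≤ f' e p1 := by
    intro e
    have := keyP e {p1} (Finset.mem_singleton_self p1)
    simpa using this
  -- claim (3)
  have hstrict : 0 < w' p1 → w p1 < w' p1 := by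
    intro hpos
    rw [hw'] at hpos
    obtain ⟨e0, -, he0⟩ : ∃ e ∈ Finset.univ, 0 < f' e p1 := by
      by_contra hno
      push_neg at hno
      exact absurd (Finset.sum_nonpos fun e he => hno e he) (not_le.mpr hpos)
    have hedge : f e0 p1 < f' e0 p1 := by
      rcases (key3 e0).lt_or_eq with h | h
      · exact h
      · exfalso
        have hfp : 0 < f e0 p1 := by rw [h]; exact he0
        have h3 : L f e0 p1 < L f' e0 p1 := by
          rw [hfpos e0 p1 hfp, hf'pos e0 p1 he0]; exact hM1
        rw [hL, hL] at h3
        have hFge : ∑ j, f' e0 j ≤ ∑ j, f e0 j := by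
          have h4 : ∑ j ∈ Finset.univ.erase p1, f' e0 j ≤
              ∑ j ∈ Finset.univ.erase p1, f e0 j :=
            Finset.sum_le_sum fun j hj => key2 e0 j (Finset.ne_of_mem_erase hj)
          have h5 := Finset.sum_erase_add Finset.univ (f e0) (Finset.mem_univ p1)
          have h6 := Finset.sum_erase_add Finset.univ (f' e0) (Finset.mem_univ p1)
          linarith [h.le]
        have hFeq : (∑ j, f e0 j) = ∑ j, f' e0 j := le_antisymm (key1 e0) hFge
        rw [hFeq, h] at h3
        exact lt_irrefl _ h3
    rw [hw, hw']
    exact Finset.sum_lt_sum (fun e _ => key3 e) ⟨e0, Finset.mem_univ e0, hedge⟩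
  refine ⟨key1, ?_, hstrict, ?_, ?_⟩
  · rw [hw, hw']
    exact Finset.sum_le_sum fun e _ => key3 e
  · intro i hi
    rw [hw, hw']
    exact Finset.sum_le_sum fun e _ => key2 e i hi
  · intro P hP
    simp only [hw, hw']
    rw [Finset.sum_comm, Finset.sum_comm (s := P)]
    exact Finset.sum_le_sum fun e _ => keyP e P hP
end

section
/- Continuity of GraphFlow: let M and M' be marginal cost vectors with |M¹ − M'¹| ≤ ε and Mʲ = M'ʲ for j > 1, and let (f, w), (f', w') be the corresponding GraphFlow outputs (equilibrium flows with marginal-cost conditions as in Claim 3.1). Suppose on [0,V] every cost function satisfies l_e'(x) ≥ 1/Ψ and Ψ ≥ l_e(x), l_e'(x). Then for every player i and edge e, |f_e^i − f_e'^i| ≤ 2nΨε, and hence each demand satisfies |w_i − w_i'| ≤ 2mnΨε. -/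
/-!
Fix an edge and let `x ≥ y` be its total loads under the two flows. Since the costs are
increasing and convex, both the cost and its derivative are at least as large at `x` as at `y`.
Hence a player with `f_e^i > f_e'^i` on that edge has marginal cost `M_i`, while its marginal cost
under `f'` is at most `M'_i`, and the two differ by at least `(f_e^i - f_e'^i) / Ψ`; so
`f_e^i - f_e'^i ≤ Ψ ε`. Since the total load on the edge went down, the one player whose flow
went up gained at most the sum of the others' losses, `(n - 1) Ψ ε`. Summing over the edges
bounds the demands.
-/

open Finset

section GraphFlow

variable {E P : Type*} [Fintype P]

noncomputable def marginalCost (l : E → ℝ → ℝ) (f : E → P → ℝ) (e : E) (i : P) : ℝ :=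
  l e (∑ j, f e j) + f e i * deriv (l e) (∑ j, f e j)

/-- The conditions of Claim 3.1 on the output flow `f` of GraphFlow for the marginal costs `M`. -/
structure IsGraphFlowOutput (l : E → ℝ → ℝ) (M : P → ℝ) (f : E → P → ℝ) : Prop where
  nonneg : ∀ e i, 0 ≤ f e i
  le_marginalCost : ∀ e i, M i ≤ marginalCost l f e i
  marginalCost_eq : ∀ e i, 0 < f e i → marginalCost l f e i = M i

theorem sub_le_mul_of_marginal_sub_le {a b c c' d d' μ μ' Ψ ε : ℝ} (hΨ : 0 < Ψ) (hε : 0 ≤ ε)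
    (hd' : 1 / Ψ ≤ d') (hd : d' ≤ d) (hc : c' ≤ c) (hb : 0 ≤ b)
    (ha : 0 < a → c + a * d = μ) (hb' : μ' ≤ c' + b * d') (hμ : μ - μ' ≤ ε) :
    a - b ≤ Ψ * ε := by
  rcases le_or_gt a b with hab | hab
  · nlinarith
  have ha₀ : 0 < a := hb.trans_lt hab
  calc a - b = Ψ * ((a - b) * (1 / Ψ)) := by field_simp
    _ ≤ Ψ * ((a - b) * d') := by gcongr
    _ ≤ Ψ * (μ - μ') := by gcongr; nlinarith [mul_le_mul_of_nonneg_left hd ha₀.le, ha ha₀]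
    _ ≤ Ψ * ε := by gcongr

theorem abs_sub_le_card_mul_of_sum_le {a b : P → ℝ} {δ : ℝ} (hδ : 0 ≤ δ)
    (hsum : ∑ j, b j ≤ ∑ j, a j) (h : ∀ j, a j - b j ≤ δ) (i : P) :
    |a i - b i| ≤ Fintype.card P * δ := by
  classical
  have hcard : 0 < Fintype.card P := Fintype.card_pos_iff.mpr ⟨i⟩
  have hothers : ∑ j ∈ univ.erase i, (a j - b j) ≤ (Fintype.card P - 1) * δ := by
    calc ∑ j ∈ univ.erase i, (a j - b j) ≤ (univ.erase i).card • δ :=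
          sum_le_card_nsmul _ _ _ fun j _ => h j
      _ = (Fintype.card P - 1) * δ := by
          rw [nsmul_eq_mul, card_erase_of_mem (mem_univ i), card_univ,
            Nat.cast_pred hcard]
  have hsplit : a i - b i + ∑ j ∈ univ.erase i, (a j - b j) = ∑ j, a j - ∑ j, b j := by
    rw [add_sum_erase _ (fun j => a j - b j) (mem_univ i), sum_sub_distrib]
  have hδcard : δ ≤ Fintype.card P * δ := le_mul_of_one_le_left hδ (by exact_mod_cast hcard)
  rw [abs_le]
  constructor <;> linarith [h i]

namespace IsGraphFlowOutput

variable {l : E → ℝ → ℝ} {M M' : P → ℝ} {f f' : E → P → ℝ} {Ψ ε : ℝ}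

theorem of_complementarity (nonneg : ∀ e i, 0 ≤ f e i)
    (of_eq_zero : ∀ e i, f e i = 0 → M i ≤ marginalCost l f e i)
    (of_pos : ∀ e i, 0 < f e i → marginalCost l f e i = M i) : IsGraphFlowOutput l M f :=
  ⟨nonneg, fun e i => (nonneg e i).eq_or_lt.elim (fun h => of_eq_zero e i h.symm)
    (fun h => (of_pos e i h).ge), of_pos⟩

theorem sub_le_of_load_le (hf : IsGraphFlowOutput l M f) (hf' : IsGraphFlowOutput l M' f')
    (hΨ : 0 < Ψ) (hε : 0 ≤ ε) (hM : ∀ i, M i - M' i ≤ ε) {e : E}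
    (hl : Monotone (l e)) (hl' : Monotone (deriv (l e)))
    (hderiv : 1 / Ψ ≤ deriv (l e) (∑ j, f' e j)) (hload : ∑ j, f' e j ≤ ∑ j, f e j) (i : P) :
    f e i - f' e i ≤ Ψ * ε :=
  sub_le_mul_of_marginal_sub_le hΨ hε hderiv (hl' hload) (hl hload) (hf'.nonneg e i)
    (hf.marginalCost_eq e i) (hf'.le_marginalCost e i) (hM i)

theorem abs_sub_le (hf : IsGraphFlowOutput l M f) (hf' : IsGraphFlowOutput l M' f')
    (hΨ : 0 < Ψ) (hM : ∀ i, |M i - M' i| ≤ ε)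
    (hl : ∀ e, Monotone (l e)) (hl' : ∀ e, Monotone (deriv (l e)))
    (hderiv : ∀ e, 1 / Ψ ≤ deriv (l e) (∑ j, f e j))
    (hderiv' : ∀ e, 1 / Ψ ≤ deriv (l e) (∑ j, f' e j)) (e : E) (i : P) :
    |f e i - f' e i| ≤ Fintype.card P * (Ψ * ε) := by
  have hε : 0 ≤ ε := (abs_nonneg _).trans (hM i)
  have hΨε : 0 ≤ Ψ * ε := mul_nonneg hΨ.le hε
  rcases le_total (∑ j, f' e j) (∑ j, f e j) with hload | hload
  · exact abs_sub_le_card_mul_of_sum_le hΨε hload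
      (hf.sub_le_of_load_le hf' hΨ hε (fun i => (abs_le.mp (hM i)).2) (hl e) (hl' e)
        (hderiv' e) hload) i
  · rw [abs_sub_comm]
    exact abs_sub_le_card_mul_of_sum_le hΨε hload
      (hf'.sub_le_of_load_le hf hΨ hε (fun i => by linarith [(abs_le.mp (hM i)).1]) (hl e)
        (hl' e) (hderiv e) hload) i

end IsGraphFlowOutput

end GraphFlow

theorem graphflow_continuous_general
    (m n : ℕ) (V Ψ ε : ℝ) (hΨ : 0 < Ψ)
    (l : Fin m → ℝ → ℝ)
    (hl_mono : ∀ e, StrictMono (l e))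
    (hl_conv : ∀ e, ConvexOn ℝ Set.univ (l e))
    (hl_diff : ∀ e, Differentiable ℝ (l e))
    -- bounds on the cost functions on [0, V]
    (hl_lb : ∀ e, ∀ x ∈ Set.Icc (0 : ℝ) V, 1 / Ψ ≤ deriv (l e) x)
    (L : (Fin m → Fin n → ℝ) → Fin m → Fin n → ℝ)
    (hL : ∀ f e i, L f e i =
      l e (∑ j, f e j) + f e i * deriv (l e) (∑ j, f e j))
    (p1 : Fin n)
    (M M' : Fin n → ℝ) (hM1 : |M p1 - M' p1| ≤ ε) (hMi : ∀ i ≠ p1, M' i = M i)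
    (f f' : Fin m → Fin n → ℝ) (w w' : Fin n → ℝ)
    -- GraphFlow output conditions for (f, w) with marginal costs M
    (hf_nonneg : ∀ e i, 0 ≤ f e i) (hw : ∀ i, w i = ∑ e, f e i)
    (hftot : ∀ e, (∑ j, f e j) ∈ Set.Icc (0 : ℝ) V)
    (hf0 : ∀ e i, f e i = 0 → M i ≤ L f e i)
    (hfpos : ∀ e i, 0 < f e i → L f e i = M i)
    -- GraphFlow output conditions for (f', w') with marginal costs M'
    (hf'_nonneg : ∀ e i, 0 ≤ f' e i) (hw' : ∀ i, w' i = ∑ e, f' e i)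
    (hf'tot : ∀ e, (∑ j, f' e j) ∈ Set.Icc (0 : ℝ) V)
    (hf'0 : ∀ e i, f' e i = 0 → M' i ≤ L f' e i)
    (hf'pos : ∀ e i, 0 < f' e i → L f' e i = M' i) :
    (∀ e i, |f e i - f' e i| ≤ 2 * n * Ψ * ε) ∧
    (∀ i, |w i - w' i| ≤ 2 * m * n * Ψ * ε) := by
  obtain rfl : L = marginalCost l := funext fun f => funext fun e => funext (hL f e)
  have hε : 0 ≤ ε := (abs_nonneg _).trans hM1
  have hM : ∀ i, |M i - M' i| ≤ ε := fun i => by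
    rcases eq_or_ne i p1 with rfl | hi
    · exact hM1
    · simpa [hMi i hi] using hε
  have hf := IsGraphFlowOutput.of_complementarity hf_nonneg hf0 hfpos
  have hf' := IsGraphFlowOutput.of_complementarity hf'_nonneg hf'0 hf'pos
  have hflow : ∀ e i, |f e i - f' e i| ≤ n * (Ψ * ε) := by
    simpa using hf.abs_sub_le hf' hΨ hM
      (fun e => (hl_mono e).monotone)
      (fun e => monotoneOn_univ.mp ((hl_conv e).monotoneOn_deriv
        fun x _ => (hl_diff e).differentiableAt))
      (fun e => hl_lb e _ (hftot e)) (fun e => hl_lb e _ (hf'tot e))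
  have hmnΨε : 0 ≤ m * (n * (Ψ * ε)) := by positivity
  refine ⟨fun e i => by linarith [hflow e i, (by positivity : 0 ≤ n * (Ψ * ε))], fun i => ?_⟩
  calc |w i - w' i| = |∑ e, (f e i - f' e i)| := by rw [hw, hw', sum_sub_distrib]
    _ ≤ ∑ e, |f e i - f' e i| := abs_sum_le_sum_abs _ _
    _ ≤ m • (n * (Ψ * ε)) := by simpa using sum_le_card_nsmul univ _ _ fun e _ => hflow e i
    _ ≤ 2 * m * n * Ψ * ε := by rw [nsmul_eq_mul]; linarith

/-- Claim 3.5 (continuity of GraphFlow): if two marginal cost vectors differ only in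
the first coordinate, by at most `ε`, then the corresponding GraphFlow flows differ
by at most `2nΨε` on each edge and the demands by at most `2mnΨε`. -/
theorem graphflow_continuous
    (m n : ℕ) (hn : 0 < n) (V Ψ ε : ℝ) (hΨ : 0 < Ψ) (hε : 0 ≤ ε)
    (l : Fin m → ℝ → ℝ)
    (hl_mono : ∀ e, StrictMono (l e))
    (hl_conv : ∀ e, ConvexOn ℝ Set.univ (l e))
    (hl_diff : ∀ e, Differentiable ℝ (l e))
    -- bounds on the cost functions on [0, V]
    (hl_lb : ∀ e, ∀ x ∈ Set.Icc (0 : ℝ) V, 1 / Ψ ≤ deriv (l e) x)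
    (hl_ub : ∀ e, ∀ x ∈ Set.Icc (0 : ℝ) V, l e x ≤ Ψ ∧ deriv (l e) x ≤ Ψ)
    (L : (Fin m → Fin n → ℝ) → Fin m → Fin n → ℝ)
    (hL : ∀ f e i, L f e i =
      l e (∑ j, f e j) + f e i * deriv (l e) (∑ j, f e j))
    (p1 : Fin n) (hp1 : p1 = ⟨0, hn⟩)
    (M M' : Fin n → ℝ) (hM1 : |M p1 - M' p1| ≤ ε) (hMi : ∀ i ≠ p1, M' i = M i)
    (f f' : Fin m → Fin n → ℝ) (w w' : Fin n → ℝ)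
    -- GraphFlow output conditions for (f, w) with marginal costs M
    (hf_nonneg : ∀ e i, 0 ≤ f e i) (hw : ∀ i, w i = ∑ e, f e i)
    (hftot : ∀ e, (∑ j, f e j) ∈ Set.Icc (0 : ℝ) V)
    (hf0 : ∀ e i, f e i = 0 → M i ≤ L f e i)
    (hfpos : ∀ e i, 0 < f e i → L f e i = M i)
    -- GraphFlow output conditions for (f', w') with marginal costs M'
    (hf'_nonneg : ∀ e i, 0 ≤ f' e i) (hw' : ∀ i, w' i = ∑ e, f' e i)
    (hf'tot : ∀ e, (∑ j, f' e j) ∈ Set.Icc (0 : ℝ) V)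
    (hf'0 : ∀ e i, f' e i = 0 → M' i ≤ L f' e i)
    (hf'pos : ∀ e i, 0 < f' e i → L f' e i = M' i) :
    (∀ e i, |f e i - f' e i| ≤ 2 * n * Ψ * ε) ∧
    (∀ i, |w i - w' i| ≤ 2 * m * n * Ψ * ε) :=
  graphflow_continuous_general m n V Ψ ε hΨ l hl_mono hl_conv hl_diff hl_lb L hL p1 M M' hM1 hMi f
    f' w w' hf_nonneg hw hftot hf0 hfpos hf'_nonneg hw' hf'tot hf'0 hf'pos
end

section
/- Monotone marginal-cost comparison: fix a player k and two marginal cost vectors M, M' such that Mⁱ = M'ⁱ for all i < k, and the GraphFlow demands agree for all players i > k (GVᵢ(M) = GVᵢ(M') for i > k), where GVᵢ denotes the demand for player i determined by the GraphFlow conditions. Assume GraphFlow is monotone in the sense of Claim 3.6. If GV_k(M) > GV_k(M'), then Mᵏ > M'ᵏ. -/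
/-- Lemma 3.9: if two marginal cost vectors agree before coordinate `k` and yield the
same GraphFlow demands after coordinate `k`, then a strictly larger demand for
player `k` forces a strictly larger marginal cost for player `k`.
The map `GV` from marginal cost vectors to demand vectors is assumed monotone in the
sense of Claim 3.6. -/
theorem monotone_marginal_cost_comparison
    (n : ℕ) (GV : (Fin n → ℝ) → Fin n → ℝ)
    (hmono : ∀ (t : Fin n) (x x' : Fin n → ℝ),
      (∀ i ≠ t, x' i = x i) → x t < x' t →
        GV x t ≤ GV x' t ∧
        (∀ i ≠ t, GV x' i ≤ GV x i) ∧
        (∀ P : Finset (Fin n), t ∈ P → ∑ i ∈ P, GV x i ≤ ∑ i ∈ P, GV x' i))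
    (k : Fin n) (M M' : Fin n → ℝ)
    (hlt : ∀ i : Fin n, i < k → M i = M' i)
    (hgt : ∀ i : Fin n, k < i → GV M i = GV M' i)
    (hdem : GV M' k < GV M k) :
    M' k < M k := by
  classical
  by_contra h
  push_neg at h
  -- h : M k ≤ M' k
  set P : Finset (Fin n) := Finset.univ.filter (fun i => k ≤ i ∧ M i ≤ M' i) with hPdef
  have hkP : k ∈ P := by simp [hPdef, h]
  -- interpolation between M and M'
  set x : Finset (Fin n) → Fin n → ℝ := fun S i => if i ∈ S then M' i else M i with hxdef
  -- key: the sum over P never decreases as we flip coordinates ≥ k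
  have key : ∀ S : Finset (Fin n), (∀ i ∈ S, k ≤ i) →
      ∑ i ∈ P, GV M i ≤ ∑ i ∈ P, GV (x S) i := by
    intro S
    induction S using Finset.induction with
    | empty =>
        intro _
        have : x ∅ = M := by funext i; simp [hxdef]
        rw [this]
    | @insert t S htS ih =>
        intro hall
        have hkt : k ≤ t := hall t (Finset.mem_insert_self t S)
        have ih' := ih (fun i hi => hall i (Finset.mem_insert_of_mem hi))
        refine le_trans ih' ?_
        have hne : ∀ i ≠ t, x (insert t S) i = x S i := by
          intro i hi
          simp [hxdef, Finset.mem_insert, hi]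
        have hxt : x S t = M t := by simp [hxdef, htS]
        have hxt' : x (insert t S) t = M' t := by simp [hxdef]
        rcases lt_trichotomy (M t) (M' t) with hcmp | hcmp | hcmp
        · -- increasing step, t ∈ P
          have htP : t ∈ P := by simp [hPdef, hkt, le_of_lt hcmp]
          have := (hmono t (x S) (x (insert t S)) hne (by rw [hxt, hxt']; exact hcmp)).2.2
          exact this P htP
        · -- equal: no change
          have : x (insert t S) = x S := by
            funext i
            by_cases hi : i = t
            · subst hi; rw [hxt, hxt', hcmp]
            · exact hne i hi
          rw [this]
        · -- decreasing step, t ∉ P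
          have htP : t ∉ P := by
            simp only [hPdef, Finset.mem_filter, Finset.mem_univ, true_and,
              not_and, not_le]
            intro _
            exact hcmp
          have hne' : ∀ i ≠ t, x S i = x (insert t S) i := fun i hi => (hne i hi).symm
          have := (hmono t (x (insert t S)) (x S) hne'
            (by rw [hxt, hxt']; exact hcmp)).2.1
          refine Finset.sum_le_sum ?_
          intro i hiP
          have : i ≠ t := fun hit => htP (hit ▸ hiP)
          exact (hmono t (x (insert t S)) (x S) hne'
            (by rw [hxt, hxt']; exact hcmp)).2.1 i this
  -- take S = all coordinates ≥ k, whence x S = M'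
  have hS : ∑ i ∈ P, GV M i ≤ ∑ i ∈ P, GV M' i := by
    have hx : x (Finset.univ.filter (fun i => k ≤ i)) = M' := by
      funext i
      by_cases hi : k ≤ i
      · simp [hxdef, hi]
      · simp only [hxdef, Finset.mem_filter, Finset.mem_univ, true_and, hi, if_false]
        exact hlt i (lt_of_not_ge hi)
    have := key (Finset.univ.filter (fun i => k ≤ i))
      (fun i hi => (Finset.mem_filter.mp hi).2)
    rw [hx] at this
    exact this
  -- split off k from the sums
  rw [← Finset.add_sum_erase P (GV M) hkP, ← Finset.add_sum_erase P (GV M') hkP] at hS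
  have heq : ∑ i ∈ P.erase k, GV M i = ∑ i ∈ P.erase k, GV M' i := by
    refine Finset.sum_congr rfl ?_
    intro i hi
    have h1 : i ≠ k := (Finset.mem_erase.mp hi).1
    have h2 : k ≤ i := ((Finset.mem_filter.mp (Finset.mem_erase.mp hi).2).2).1
    exact hgt i (lt_of_le_of_ne h2 (Ne.symm h1))
  rw [heq] at hS
  have : GV M k ≤ GV M' k := le_of_add_le_add_right hS
  exact absurd this (not_le.mpr hdem)
end

section
/- Telescoping interpolation inequality: let F : ℝⁿ → ℝⁿ be a function such that for all vectors x and coordinate t, if x' differs from x only in coordinate t with x'_t > x_t, then F_t(x') ≥ F_t(x) and F_i(x') ≤ F_i(x) for i ≠ t, and ∑_{i∈P} F_i(x') ≥ ∑_{i∈P} F_i(x) for every subset P containing t. Then for any two vectors M, M' and any subset P ⊆ [n] satisfying: i ∈ P whenever M_i ≤ M'_i and i ≥ k (for some fixed k with M_i = M'_i for i < k), and i ∉ P whenever M_i > M'_i and i ≥ k, we have ∑_{i∈P} F_i(M) ≤ ∑_{i∈P} F_i(M'). -/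
/-- Telescoping interpolation inequality abstracted from the proof of Lemma 3.9:
for a cross-monotone map `F`, interpolating between `M` and `M'` one coordinate at a
time shows that the total `F`-value of a suitable subset `P` cannot decrease. -/
theorem telescoping_interpolation
    (n : ℕ) (F : (Fin n → ℝ) → Fin n → ℝ)
    (hmono : ∀ (t : Fin n) (x x' : Fin n → ℝ),
      (∀ i ≠ t, x' i = x i) → x t < x' t →
        F x t ≤ F x' t ∧
        (∀ i ≠ t, F x' i ≤ F x i) ∧
        (∀ P : Finset (Fin n), t ∈ P → ∑ i ∈ P, F x i ≤ ∑ i ∈ P, F x' i))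
    (k : Fin n) (M M' : Fin n → ℝ)
    (heq : ∀ i : Fin n, i < k → M i = M' i)
    (P : Finset (Fin n))
    (hin : ∀ i : Fin n, k ≤ i → M i ≤ M' i → i ∈ P)
    (hout : ∀ i : Fin n, k ≤ i → M' i < M i → i ∉ P) :
    ∑ i ∈ P, F M i ≤ ∑ i ∈ P, F M' i := by
  set g : ℕ → Fin n → ℝ := fun t i => if (i : ℕ) < t then M' i else M i with hg
  have hg0 : g 0 = M := by funext i; simp [g]
  have hgn : g n = M' := by funext i; simp [g, i.isLt]
  have key : ∀ t : ℕ, t ≤ n → ∑ i ∈ P, F M i ≤ ∑ i ∈ P, F (g t) i := by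
    intro t
    induction t with
    | zero => intro _; rw [hg0]
    | succ t ih =>
      intro ht
      have htn : t < n := ht
      refine (ih (le_of_lt htn)).trans ?_
      set tt : Fin n := ⟨t, htn⟩ with htt
      have hne : ∀ i : Fin n, i ≠ tt → g (t+1) i = g t i := by
        intro i hi
        have hne' : (i : ℕ) ≠ t := fun h => hi (Fin.ext h)
        simp only [g]
        rcases lt_or_gt_of_ne hne' with h | h
        · simp [h, Nat.lt_succ_of_lt h]
        · simp [Nat.not_lt.2 (le_of_lt h), Nat.not_lt.2 (Nat.succ_le_of_lt h)]
      have hgt : g t tt = M tt := by simp [g, tt]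
      have hgt1 : g (t+1) tt = M' tt := by simp [g, tt]
      rcases lt_trichotomy (M tt) (M' tt) with hlt | heq' | hgt'
      · have hk : k ≤ tt := by
          by_contra h
          exact absurd (heq tt (lt_of_not_ge h)) (ne_of_lt hlt)
        have hP : tt ∈ P := hin tt hk (le_of_lt hlt)
        exact (hmono tt (g t) (g (t+1)) hne (by rw [hgt, hgt1]; exact hlt)).2.2 P hP
      · have hEq : g (t+1) = g t := by
          funext i
          by_cases h : i = tt
          · rw [h, hgt, hgt1, heq']
          · exact hne i h
        rw [hEq]
      · have hk : k ≤ tt := by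
          by_contra h
          exact absurd (heq tt (lt_of_not_ge h)) (ne_of_gt hgt')
        have hP : tt ∉ P := hout tt hk hgt'
        have hm := hmono tt (g (t+1)) (g t) (fun i hi => (hne i hi).symm)
          (by rw [hgt, hgt1]; exact hgt')
        refine Finset.sum_le_sum fun i hi => ?_
        exact hm.2.1 i (fun h => hP (h ▸ hi))
  have h := key n le_rfl
  rwa [hgn] at h
end

section
/- Existence of marginal costs via monotone iteration: let G : [0, Λ]ⁿ → ℝ≥0ⁿ be continuous (with the Lipschitz property of Claim 3.5) and satisfy the monotonicity of Claim 3.6, and suppose for each coordinate i and each fixing of the other coordinates in [0, Λ], and each target w̄ᵢ ∈ (0, V], there exists a value in [0, Λ] making coordinate i's output equal to w̄ᵢ (single-coordinate surjectivity). Then for any subset S of coordinates, any strictly positive targets (w̄ᵢ)_{i∈S} with w̄ᵢ ≤ V, and any fixed values Mⁱ ∈ [0, Λ] for i ∉ S, there exists a vector N ∈ [0, Λ]ⁿ with Nⁱ = Mⁱ for i ∉ S such that Gᵢ(N) = w̄ᵢ for all i ∈ S. -/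
/-- Abstract Lemma 3.7 (existence of marginal costs via monotone iteration): a
continuous, cross-monotone, singly-surjective map `G` on the box `[0, Λ]ⁿ` admits,
for any subset `S` of coordinates with strictly positive targets `w̄ᵢ ≤ V` and any
fixed values on the complement, a point `N` hitting all the targets on `S`. -/
theorem existence_of_marginal_costs
    (n : ℕ) (Λ V : ℝ) (hΛ : 0 ≤ Λ) (hV : 0 < V)
    (G : (Fin n → ℝ) → Fin n → ℝ)
    (hG_nonneg : ∀ x ∈ Set.Icc (0 : Fin n → ℝ) (fun _ => Λ), ∀ i, 0 ≤ G x i)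
    (hcont : ContinuousOn G (Set.Icc (0 : Fin n → ℝ) (fun _ => Λ)))
    (hmono : ∀ (t : Fin n), ∀ x ∈ Set.Icc (0 : Fin n → ℝ) (fun _ => Λ),
      ∀ x' ∈ Set.Icc (0 : Fin n → ℝ) (fun _ => Λ),
      (∀ i ≠ t, x' i = x i) → x t < x' t →
        G x t ≤ G x' t ∧ (∀ i ≠ t, G x' i ≤ G x i))
    -- single-coordinate surjectivity
    (hsurj : ∀ (i : Fin n), ∀ x ∈ Set.Icc (0 : Fin n → ℝ) (fun _ => Λ),
      ∀ w : ℝ, 0 < w → w ≤ V →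
        ∃ c ∈ Set.Icc (0 : ℝ) Λ, G (Function.update x i c) i = w)
    (S : Finset (Fin n)) (wbar : Fin n → ℝ)
    (hwbar : ∀ i ∈ S, 0 < wbar i ∧ wbar i ≤ V)
    (M : Fin n → ℝ) (hM : M ∈ Set.Icc (0 : Fin n → ℝ) (fun _ => Λ)) :
    ∃ N ∈ Set.Icc (0 : Fin n → ℝ) (fun _ => Λ),
      (∀ i ∉ S, N i = M i) ∧ ∀ i ∈ S, G N i = wbar i := by
  classical
  set B : Set (Fin n → ℝ) := Set.Icc (0 : Fin n → ℝ) (fun _ => Λ) with hBdef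
  have hmemB : ∀ y : Fin n → ℝ, y ∈ B ↔ ∀ i, 0 ≤ y i ∧ y i ≤ Λ := by
    intro y
    constructor
    · intro hy i; exact ⟨hy.1 i, hy.2 i⟩
    · intro hy; exact ⟨fun i => (hy i).1, fun i => (hy i).2⟩
  rcases S.eq_empty_or_nonempty with hSe | hSne
  · exact ⟨M, hM, fun i _ => rfl, fun i hi => by simp [hSe] at hi⟩
  obtain ⟨i0, _⟩ := hSne
  have hn : 0 < n := i0.pos
  set x0 : Fin n → ℝ := fun i => if i ∈ S then 0 else M i with hx0def
  have hx0B : x0 ∈ B := by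
    rw [hmemB]
    intro i
    have hMi := (hmemB M).1 hM
    by_cases h : i ∈ S <;> simp [hx0def, h, hΛ, (hMi i).1, (hMi i).2]
  -- key single-step existence : a new value ≥ the old one hitting the target
  have key : ∀ (t : Fin n) (y : Fin n → ℝ), t ∈ S → y ∈ B →
      (y t = 0 ∨ G y t ≤ wbar t) →
      ∃ e, y t ≤ e ∧ 0 ≤ e ∧ e ≤ Λ ∧ G (Function.update y t e) t = wbar t := by
    intro t y ht hyB hyt
    obtain ⟨e, he, hGe⟩ := hsurj t y hyB (wbar t) (hwbar t ht).1 (hwbar t ht).2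
    rcases le_or_gt (y t) e with h | h
    · exact ⟨e, h, he.1, he.2, hGe⟩
    · refine ⟨y t, le_refl _, ((hmemB y).1 hyB t).1, ((hmemB y).1 hyB t).2, ?_⟩
      rw [Function.update_eq_self]
      rcases hyt with h0 | hle
      · exfalso; rw [h0] at h; exact absurd he.1 (not_le.mpr h)
      · have hupB : Function.update y t e ∈ B := by
          rw [hmemB]; intro i
          rcases eq_or_ne i t with rfl | hne
          · simpa using he
          · rw [Function.update_of_ne hne]; exact (hmemB y).1 hyB i
        have hm := hmono t (Function.update y t e) hupB y hyB
          (fun i hi => (Function.update_of_ne hi e y).symm)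
          (by simpa using h)
        have h1 : wbar t ≤ G y t := by rw [← hGe]; exact hm.1
        linarith
  choose! d hd1 hd2 hd3 hd4 using key
  -- the iteration
  set step : ℕ → (Fin n → ℝ) → (Fin n → ℝ) := fun k y =>
    if (⟨k % n, Nat.mod_lt k hn⟩ : Fin n) ∈ S then
      Function.update y ⟨k % n, Nat.mod_lt k hn⟩ (d ⟨k % n, Nat.mod_lt k hn⟩ y)
    else y with hstepdef
  set x : ℕ → Fin n → ℝ := fun k => Nat.rec x0 step k with hxdef
  have hx_succ : ∀ k, x (k + 1) = step k (x k) := fun k => rfl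
  -- the one-step properties
  have stepprop : ∀ k : ℕ, x k ∈ B → (∀ i ∈ S, x k i = 0 ∨ G (x k) i ≤ wbar i) →
      x k ≤ x (k + 1) ∧ x (k + 1) ∈ B ∧
      (∀ i, i ≠ (⟨k % n, Nat.mod_lt k hn⟩ : Fin n) → x (k + 1) i = x k i) ∧
      (∀ i ∈ S, x (k + 1) i = 0 ∨ G (x (k + 1)) i ≤ wbar i) ∧
      (∀ i, i ∉ S → x (k + 1) i = x k i) ∧
      ((⟨k % n, Nat.mod_lt k hn⟩ : Fin n) ∈ S →
        G (x (k + 1)) ⟨k % n, Nat.mod_lt k hn⟩ = wbar ⟨k % n, Nat.mod_lt k hn⟩) := by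
    intro k hBk hIk
    set t : Fin n := ⟨k % n, Nat.mod_lt k hn⟩ with htdef
    by_cases ht : t ∈ S
    · have hs : x (k + 1) = Function.update (x k) t (d t (x k)) := by
        rw [hx_succ, hstepdef]; simp only [← htdef, if_pos ht]
      have h1 := hd1 t (x k) ht hBk (hIk t ht)
      have h2 := hd2 t (x k) ht hBk (hIk t ht)
      have h3 := hd3 t (x k) ht hBk (hIk t ht)
      have h4 := hd4 t (x k) ht hBk (hIk t ht)
      have hle : x k ≤ x (k + 1) := by
        intro i
        rcases eq_or_ne i t with rfl | hne
        · rw [hs, Function.update_self]; exact h1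
        · rw [hs, Function.update_of_ne hne]
      have hB1 : x (k + 1) ∈ B := by
        rw [hmemB]; intro i
        rcases eq_or_ne i t with rfl | hne
        · rw [hs, Function.update_self]; exact ⟨h2, h3⟩
        · rw [hs, Function.update_of_ne hne]; exact (hmemB _).1 hBk i
      have hoff : ∀ i, i ≠ t → x (k + 1) i = x k i := by
        intro i hne; rw [hs, Function.update_of_ne hne]
      have hhit : G (x (k + 1)) t = wbar t := by rw [hs]; exact h4
      refine ⟨hle, hB1, hoff, ?_, fun i hi => hoff i (fun h => hi (h ▸ ht)), fun _ => hhit⟩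
      intro i hi
      rcases eq_or_ne i t with rfl | hne
      · exact Or.inr (le_of_eq hhit)
      · rcases hIk i hi with h0 | hGle
        · exact Or.inl (by rw [hoff i hne]; exact h0)
        · right
          rcases eq_or_lt_of_le h1 with heq | hlt
          · have : x (k + 1) = x k := by rw [hs, ← heq, Function.update_eq_self]
            rw [this]; exact hGle
          · have hm := hmono t (x k) hBk (x (k + 1)) hB1 hoff
              (by rw [hs, Function.update_self]; exact hlt)
            exact le_trans (hm.2 i hne) hGle
    · have hs : x (k + 1) = x k := by
        rw [hx_succ, hstepdef]; simp only [← htdef, if_neg ht]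
      rw [hs]
      exact ⟨le_refl _, hBk, fun _ _ => rfl, hIk, fun _ _ => rfl, fun h => absurd h ht⟩
  -- the invariant
  have inv : ∀ k, x k ∈ B ∧ (∀ i, i ∉ S → x k i = M i) ∧
      (∀ i ∈ S, x k i = 0 ∨ G (x k) i ≤ wbar i) := by
    intro k
    induction k with
    | zero =>
      refine ⟨hx0B, fun i hi => by simp [hxdef, hx0def, hi], fun i hi => Or.inl ?_⟩
      simp [hxdef, hx0def, hi]
    | succ k ih =>
      obtain ⟨hBk, hMk, hIk⟩ := ih
      obtain ⟨_, hB1, _, hI1, hoffS, _⟩ := stepprop k hBk hIk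
      exact ⟨hB1, fun i hi => (hoffS i hi).trans (hMk i hi), hI1⟩
  have hmonoseq : ∀ k, x k ≤ x (k + 1) := fun k =>
    (stepprop k (inv k).1 (inv k).2.2).1
  have hGhit : ∀ k, (⟨k % n, Nat.mod_lt k hn⟩ : Fin n) ∈ S →
      G (x (k + 1)) ⟨k % n, Nat.mod_lt k hn⟩ = wbar ⟨k % n, Nat.mod_lt k hn⟩ := fun k =>
    (stepprop k (inv k).1 (inv k).2.2).2.2.2.2.2
  -- the limit
  have hmonoto : ∀ i, Monotone fun k => x k i := fun i =>
    monotone_nat_of_le_succ fun k => hmonoseq k i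
  have hbdd : ∀ i, BddAbove (Set.range fun k => x k i) := by
    intro i
    refine ⟨Λ, ?_⟩
    rintro y ⟨k, rfl⟩
    exact ((hmemB _).1 (inv k).1 i).2
  set N : Fin n → ℝ := fun i => ⨆ k, x k i with hNdef
  have hNlim : ∀ i, Filter.Tendsto (fun k => x k i) Filter.atTop (nhds (N i)) :=
    fun i => tendsto_atTop_ciSup (hmonoto i) (hbdd i)
  have hNB : N ∈ B := by
    rw [hmemB]
    intro i
    constructor
    · exact le_trans ((hmemB _).1 (inv 0).1 i).1 (le_ciSup (hbdd i) 0)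
    · exact ciSup_le fun k => ((hmemB _).1 (inv k).1 i).2
  have hNoff : ∀ i ∉ S, N i = M i := by
    intro i hi
    have h : (fun k : ℕ => x k i) = fun _ => M i := funext fun k => (inv k).2.1 i hi
    show (⨆ k, x k i) = M i
    rw [h]
    exact ciSup_const
  refine ⟨N, hNB, hNoff, ?_⟩
  intro i hi
  have hk : ∀ j : ℕ, ((i : ℕ) + j * n) % n = (i : ℕ) := by
    intro j
    rw [Nat.add_mul_mod_self_right]
    exact Nat.mod_eq_of_lt i.isLt
  have hfin : ∀ j : ℕ, (⟨((i : ℕ) + j * n) % n, Nat.mod_lt _ hn⟩ : Fin n) = i :=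
    fun j => Fin.ext (hk j)
  have hseq : ∀ j : ℕ, G (x ((i : ℕ) + j * n + 1)) i = wbar i := by
    intro j
    have h := hGhit ((i : ℕ) + j * n) (by rw [hfin j]; exact hi)
    rwa [hfin j] at h
  have hsub : Filter.Tendsto (fun j : ℕ => (i : ℕ) + j * n + 1) Filter.atTop Filter.atTop := by
    apply Filter.tendsto_atTop_mono (f := id) ?_ Filter.tendsto_id
    intro j
    have : j ≤ j * n := Nat.le_mul_of_pos_right j hn
    simp only [id_eq]
    omega
  have hxtend : Filter.Tendsto x Filter.atTop (nhds N) := tendsto_pi_nhds.mpr hNlim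
  have hsubtend : Filter.Tendsto (fun j : ℕ => x ((i : ℕ) + j * n + 1)) Filter.atTop (nhds N) :=
    hxtend.comp hsub
  have hin : Filter.Tendsto (fun j : ℕ => x ((i : ℕ) + j * n + 1)) Filter.atTop (nhdsWithin N B) :=
    tendsto_nhdsWithin_iff.mpr ⟨hsubtend, Filter.Eventually.of_forall fun j => (inv ((i : ℕ) + j * n + 1)).1⟩
  have hGt : Filter.Tendsto (fun j : ℕ => G (x ((i : ℕ) + j * n + 1))) Filter.atTop (nhds (G N)) :=
    (hcont N hNB).tendsto.comp hin
  have hGti : Filter.Tendsto (fun j : ℕ => G (x ((i : ℕ) + j * n + 1)) i) Filter.atTop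
      (nhds (G N i)) := ((continuous_apply i).tendsto _).comp hGt
  have hconst : Filter.Tendsto (fun _ : ℕ => wbar i) Filter.atTop (nhds (G N i)) := by
    have h : (fun j : ℕ => G (x ((i : ℕ) + j * n + 1)) i) = fun _ => wbar i :=
      funext fun j => hseq j
    rwa [h] at hGti
  exact tendsto_nhds_unique hconst tendsto_const_nhds
end
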